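/- arXiv:2104.11003 — 6 statements merged into one kernel-verified Lean document; each statement's English description precedes it below -/
import Mathlib

section
/- For all positive integers m, n and every integer i with 2i < mn, the number p_i(m,n) of partitions in L(m,n) of rank i satisfies p_i(m,n) ≤ p_{i+1}(m,n) (i.e., the rank sizes of L(m,n) are unimodal, increasing up to the middle rank). -/
/-!
Encode `λ ∈ L(m,n)` as the monomial `x_{λ₁} ⋯ x_{λₘ}` in the variables `x₀, …, xₙ`, so that
`p_i(m,n)` is the dimension of the span `Wᵢ` of the degree-`m` monomials of weight `∑ λⱼ = i`.
The derivations `E xⱼ = (n - j) x_{j+1}`, `F xⱼ = j x_{j-1}`, `H xⱼ = (2j - n) xⱼ` form an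
`sl₂`-triple acting on the finite-dimensional space of degree-`m` polynomials in `x₀, …, xₙ`;
`E` maps `Wᵢ` to `Wᵢ₊₁` and `H` acts on `Wᵢ` by `2i - mn`.
A nonzero `v ∈ Wᵢ` with `E v = 0` would be a primitive vector of weight `2i - mn < 0`, but in a
finite-dimensional representation of `sl₂` primitive weights are natural numbers. Hence
`E : Wᵢ → Wᵢ₊₁` is injective.
-/

open Finsupp MvPolynomial

namespace Multiset

variable {α : Type*} [DecidableEq α]

lemma degree_toFinsupp (s : Multiset α) : degree (toFinsupp s) = card s :=
  toFinsupp_sum_eq s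

lemma weight_toFinsupp {M : Type*} [AddCommMonoid M] (w : α → M) (s : Multiset α) :
    weight w (toFinsupp s) = (s.map w).sum := by
  induction s using Multiset.induction_on with
  | empty => simp
  | cons a s ih => simp [← singleton_add, ih, weight_single]

lemma exists_antitone_ofFn_eq {β : Type*} [LinearOrder β] {m : ℕ} {s : Multiset β}
    (hs : card s = m) : ∃ f : Fin m → β, Antitone f ∧ (List.ofFn f : Multiset β) = s := by
  subst hs
  rw [← length_sort (s := s) (· ≥ ·)]
  exact ⟨(s.sort (· ≥ ·)).get,
    List.sortedGE_iff_antitone_get.mp (List.sortedGE_iff_pairwise.mpr (pairwise_sort s _)),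
    by rw [List.ofFn_get, sort_eq]⟩

end Multiset

lemma Antitone.eq_of_coe_ofFn_eq {α : Type*} [LinearOrder α] {m : ℕ} {f g : Fin m → α}
    (hf : Antitone f) (hg : Antitone g) (h : (List.ofFn f : Multiset α) = List.ofFn g) :
    f = g :=
  List.ofFn_injective <| (Multiset.coe_eq_coe.mp h).eq_of_sortedGE
    (List.sortedGE_ofFn_iff.mpr hf) (List.sortedGE_ofFn_iff.mpr hg)

lemma Finsupp.weight_sub_single_add_single {σ M : Type*} [AddCommMonoid M] (w : σ → M)
    {a : σ →₀ ℕ} {j : σ} (hj : a j ≠ 0) (k : σ) :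
    weight w (a - single j 1 + single k 1) + w j = weight w a + w k := by
  rw [map_add, weight_single, one_smul, add_right_comm, weight_sub_single_add hj]

lemma Finsupp.degree_sub_single_add_single {σ : Type*} {a : σ →₀ ℕ} {j : σ} (hj : a j ≠ 0)
    (k : σ) : degree (a - single j 1 + single k 1) = degree a := by
  have := weight_sub_single_add_single (fun _ => 1) hj k
  rw [← degree_eq_weight_one] at this
  exact Nat.add_right_cancel this

section RestrictSupport

variable {R σ : Type*}

lemma finite_restrictSupport [CommSemiring R] {s : Set (σ →₀ ℕ)} (hs : s.Finite) :
    Module.Finite R (restrictSupport R s) :=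
  have := hs.to_subtype
  .of_basis (basisRestrictSupport R s)

lemma finrank_restrictSupport [CommRing R] [StrongRankCondition R] (s : Set (σ →₀ ℕ)) :
    Module.finrank R (restrictSupport R s) = Nat.card s :=
  Module.finrank_eq_nat_card_basis (basisRestrictSupport R s)

variable [CommSemiring R] (c : σ → R) (t : σ → σ)

lemma mkDerivation_monomial_one (a : σ →₀ ℕ) :
    mkDerivation R (fun j => c j • X (t j)) (monomial a (1 : R)) =
      ∑ j ∈ a.support, (a j * c j) • monomial (a - single j 1 + single (t j) 1) (1 : R) := by
  rw [mkDerivation_monomial, one_smul, Finsupp.sum]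
  refine Finset.sum_congr rfl fun j _ => ?_
  rw [X, smul_monomial, smul_eq_mul, monomial_mul, smul_monomial, smul_eq_mul, smul_eq_mul,
    mul_one, mul_one]

lemma mapsTo_mkDerivation_restrictSupport {s s' : Set (σ →₀ ℕ)}
    (h : ∀ a ∈ s, ∀ j, a j ≠ 0 → c j ≠ 0 → a - single j 1 + single (t j) 1 ∈ s') :
    Set.MapsTo (mkDerivation R fun j => c j • X (t j)) (restrictSupport R s)
      (restrictSupport R s' : Set (MvPolynomial σ R)) := by
  suffices restrictSupport R s ≤
      (restrictSupport R s').comap (mkDerivation R fun j => c j • X (t j)).toLinearMap from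
    fun p hp => this hp
  rw [restrictSupport_eq_span, Submodule.span_le]
  rintro _ ⟨a, ha, rfl⟩
  rw [SetLike.mem_coe, Submodule.mem_comap, Derivation.coeFn_coe, mkDerivation_monomial_one]
  refine Submodule.sum_mem _ fun j hj => ?_
  by_cases hc : c j = 0
  · simp [hc]
  · exact Submodule.smul_mem _ _ <| (monomial_mem_restrictSupport R).mpr <|
      .inl (h a ha j (mem_support_iff.mp hj) hc)

end RestrictSupport

def boxExponents (m n : ℕ) : Set (ℕ →₀ ℕ) := {a | degree a = m ∧ ∀ j ∈ a.support, j ≤ n}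

def boxExponentsOfWeight (m n i : ℕ) : Set (ℕ →₀ ℕ) := {a ∈ boxExponents m n | weight id a = i}

lemma boxExponents_subset_finsuppAntidiag (m n : ℕ) :
    boxExponents m n ⊆ Finset.finsuppAntidiag (Finset.range (n + 1)) m := by
  rintro a ⟨hdeg, hsupp⟩
  exact Finset.mem_finsuppAntidiag'.mpr
    ⟨hdeg, fun j hj => Finset.mem_range_succ_iff.mpr (hsupp j hj)⟩

lemma boxExponents_finite (m n : ℕ) : (boxExponents m n).Finite :=
  (Finset.finite_toSet _).subset (boxExponents_subset_finsuppAntidiag m n)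

lemma toFinsupp_ofFn_mem_boxExponentsOfWeight {m n i : ℕ} (f : Fin m → ℕ) :
    Multiset.toFinsupp (List.ofFn f : Multiset ℕ) ∈ boxExponentsOfWeight m n i ↔
      (∀ j, f j ≤ n) ∧ ∑ j, f j = i := by
  simp only [boxExponentsOfWeight, boxExponents, Set.mem_ofPred_eq, Multiset.degree_toFinsupp,
    Multiset.weight_toFinsupp, Multiset.toFinsupp_support, Multiset.mem_toFinset, Multiset.mem_coe,
    List.mem_ofFn, Multiset.coe_card, List.length_ofFn, Multiset.map_id, Multiset.sum_coe,
    List.sum_ofFn, true_and, forall_exists_index, forall_apply_eq_imp_iff]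

lemma card_antitone_eq_card_boxExponentsOfWeight (m n i : ℕ) :
    Nat.card {f : Fin m → ℕ // (∀ j, f j ≤ n) ∧ Antitone f ∧ ∑ j, f j = i} =
      Nat.card (boxExponentsOfWeight m n i) := by
  refine Nat.card_congr <| .ofBijective (fun f => ⟨Multiset.toFinsupp (List.ofFn f.1 : Multiset ℕ),
    (toFinsupp_ofFn_mem_boxExponentsOfWeight f.1).mpr ⟨f.2.1, f.2.2.2⟩⟩) ⟨?_, ?_⟩
  · rintro ⟨f, _, hf, _⟩ ⟨g, _, hg, _⟩ h
    exact Subtype.ext <| hf.eq_of_coe_ofFn_eq hg <| Multiset.toFinsupp.injective <|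
      congrArg Subtype.val h
  · rintro ⟨a, ha⟩
    obtain ⟨s, rfl⟩ := Multiset.toFinsupp.surjective a
    obtain ⟨f, hf, rfl⟩ := Multiset.exists_antitone_ofFn_eq <|
      (Multiset.degree_toFinsupp s).symm.trans ha.1.1
    obtain ⟨hfn, hfi⟩ := (toFinsupp_ofFn_mem_boxExponentsOfWeight f).mp ha
    exact ⟨⟨f, hfn, hf, hfi⟩, rfl⟩

lemma sub_single_add_single_mem_boxExponents {m n : ℕ} {a : ℕ →₀ ℕ}
    (ha : a ∈ boxExponents m n) {j : ℕ} (hj : a j ≠ 0) {k : ℕ} (hk : k ≤ n) :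
    a - single j 1 + single k 1 ∈ boxExponents m n := by
  refine ⟨(degree_sub_single_add_single hj k).trans ha.1, fun l hl => ?_⟩
  rcases Finset.mem_union.mp (support_add hl) with hl | hl
  · exact ha.2 l (support_tsub hl)
  · rw [Finset.mem_singleton.mp (support_single_subset hl)]
    exact hk

lemma sub_single_add_single_succ_mem_boxExponents {m n : ℕ} {a : ℕ →₀ ℕ}
    (ha : a ∈ boxExponents m n) {j : ℕ} (hj : a j ≠ 0) (hjn : j ≠ n) :
    a - single j 1 + single (j + 1) 1 ∈ boxExponents m n := by
  refine sub_single_add_single_mem_boxExponents ha hj ?_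
  have := ha.2 j (mem_support_iff.mpr hj)
  omega

/- Under `xⱼ ↔ Xʲ Yⁿ⁻ʲ` these are the derivations induced by `X ∂_Y`, `Y ∂_X`, `X ∂_X - Y ∂_Y`
on `Symᵐ (Symⁿ ℚ²)`. -/
noncomputable def sl2E (n : ℕ) : Derivation ℚ (MvPolynomial ℕ ℚ) (MvPolynomial ℕ ℚ) :=
  mkDerivation ℚ fun j => ((n : ℚ) - j) • X (j + 1)

noncomputable def sl2F : Derivation ℚ (MvPolynomial ℕ ℚ) (MvPolynomial ℕ ℚ) :=
  mkDerivation ℚ fun j => (j : ℚ) • X (j - 1)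

noncomputable def sl2H (n : ℕ) : Derivation ℚ (MvPolynomial ℕ ℚ) (MvPolynomial ℕ ℚ) :=
  mkDerivation ℚ fun j => (2 * (j : ℚ) - n) • X j

lemma lie_sl2E_sl2F (n : ℕ) : ⁅sl2E n, sl2F⁆ = sl2H n := by
  refine derivation_ext fun j => ?_
  rw [Derivation.commutator_apply]
  simp only [sl2E, sl2F, sl2H, mkDerivation_X]
  cases j with
  | zero => simp
  | succ k =>
    rw [Derivation.map_smul, Derivation.map_smul, mkDerivation_X, mkDerivation_X]
    simp only [Nat.add_sub_cancel]
    push_cast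
    module

lemma lie_sl2H_sl2E (n : ℕ) : ⁅sl2H n, sl2E n⁆ = (2 : ℚ) • sl2E n := by
  refine derivation_ext fun j => ?_
  rw [Derivation.commutator_apply]
  simp only [sl2E, sl2H, mkDerivation_X, Derivation.smul_apply, Derivation.map_smul]
  push_cast
  module

lemma lie_sl2H_sl2F (n : ℕ) : ⁅sl2H n, sl2F⁆ = -((2 : ℚ) • sl2F) := by
  refine derivation_ext fun j => ?_
  rw [Derivation.commutator_apply]
  simp only [sl2F, sl2H, mkDerivation_X, Derivation.neg_apply, Derivation.smul_apply]
  cases j with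
  | zero => simp
  | succ k =>
    rw [Derivation.map_smul, Derivation.map_smul, mkDerivation_X, mkDerivation_X]
    simp only [Nat.add_sub_cancel]
    push_cast
    module

lemma sl2H_monomial (n : ℕ) (a : ℕ →₀ ℕ) :
    sl2H n (monomial a 1) = (2 * ((weight id a : ℕ) : ℚ) - n * degree a) • monomial a 1 := by
  rw [sl2H, mkDerivation_monomial_one (fun j : ℕ => 2 * (j : ℚ) - n) fun j => j]
  have hcancel : ∀ j ∈ a.support, a - single j 1 + single j 1 = a :=
    fun j hj => sub_add_single_one_cancel (mem_support_iff.mp hj)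
  rw [Finset.sum_congr rfl fun j hj => by rw [hcancel j hj], ← Finset.sum_smul]
  congr 1
  simp only [weight_apply, degree_apply, Finsupp.sum, id, smul_eq_mul]
  push_cast
  rw [Finset.mul_sum, Finset.mul_sum, ← Finset.sum_sub_distrib]
  exact Finset.sum_congr rfl fun j _ => by ring

lemma sl2H_apply_of_mem {m n i : ℕ} {p : MvPolynomial ℕ ℚ}
    (hp : p ∈ restrictSupport ℚ (boxExponentsOfWeight m n i)) :
    sl2H n p = (2 * (i : ℚ) - n * m) • p := by
  rw [restrictSupport_eq_span] at hp
  induction hp using Submodule.span_induction with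
  | mem _ h =>
    obtain ⟨a, ⟨⟨hdeg, -⟩, hwt⟩, rfl⟩ := h
    rw [sl2H_monomial, hdeg, hwt]
  | zero => simp
  | add p q _ _ hp hq => rw [map_add, hp, hq, smul_add]
  | smul r p _ hp => rw [Derivation.map_smul, hp, smul_comm]

section BoxSpace

variable (m n : ℕ)

lemma mapsTo_sl2E_boxExponentsOfWeight (i : ℕ) :
    Set.MapsTo (sl2E n) (restrictSupport ℚ (boxExponentsOfWeight m n i))
      (restrictSupport ℚ (boxExponentsOfWeight m n (i + 1)) : Set (MvPolynomial ℕ ℚ)) := by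
  refine mapsTo_mkDerivation_restrictSupport _ _ fun a ⟨ha, hwt⟩ j hj hc =>
    ⟨sub_single_add_single_succ_mem_boxExponents ha hj fun h => hc (by simp [h]), ?_⟩
  have := weight_sub_single_add_single id hj (j + 1)
  simp only [id] at this ⊢
  omega

lemma mapsTo_sl2E_boxExponents :
    Set.MapsTo (sl2E n) (restrictSupport ℚ (boxExponents m n))
      (restrictSupport ℚ (boxExponents m n) : Set (MvPolynomial ℕ ℚ)) :=
  mapsTo_mkDerivation_restrictSupport _ _ fun _ ha _ hj hc =>
    sub_single_add_single_succ_mem_boxExponents ha hj fun h => hc (by simp [h])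

lemma mapsTo_sl2F_boxExponents :
    Set.MapsTo sl2F (restrictSupport ℚ (boxExponents m n))
      (restrictSupport ℚ (boxExponents m n) : Set (MvPolynomial ℕ ℚ)) :=
  mapsTo_mkDerivation_restrictSupport _ _ fun _ ha j hj _ =>
    sub_single_add_single_mem_boxExponents ha hj <|
      (Nat.sub_le j 1).trans (ha.2 j (mem_support_iff.mpr hj))

lemma mapsTo_sl2H_boxExponents :
    Set.MapsTo (sl2H n) (restrictSupport ℚ (boxExponents m n))
      (restrictSupport ℚ (boxExponents m n) : Set (MvPolynomial ℕ ℚ)) :=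
  mapsTo_mkDerivation_restrictSupport (fun j : ℕ => 2 * (j : ℚ) - n) (fun j => j)
    fun _ ha j hj _ =>
      sub_single_add_single_mem_boxExponents ha hj (ha.2 j (mem_support_iff.mpr hj))

noncomputable def boxE : Module.End ℚ (restrictSupport ℚ (boxExponents m n)) :=
  (sl2E n).toLinearMap.restrict fun _ hp => mapsTo_sl2E_boxExponents m n hp

noncomputable def boxF : Module.End ℚ (restrictSupport ℚ (boxExponents m n)) :=
  sl2F.toLinearMap.restrict fun _ hp => mapsTo_sl2F_boxExponents m n hp

noncomputable def boxH : Module.End ℚ (restrictSupport ℚ (boxExponents m n)) :=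
  (sl2H n).toLinearMap.restrict fun _ hp => mapsTo_sl2H_boxExponents m n hp

attribute [local instance] LieRing.ofAssociativeRing

lemma isSl2Triple_box (hmn : 0 < m * n) : IsSl2Triple (boxH m n) (boxE m n) (boxF m n) where
  h_ne_zero h := by
    have hmem : monomial (single 0 m) (1 : ℚ) ∈ restrictSupport ℚ (boxExponents m n) :=
      (monomial_mem_restrictSupport ℚ).mpr <| .inl ⟨by simp, fun j hj => by
        simp [(Finset.mem_singleton.mp (support_single_subset hj))]⟩
    have hzero := congrArg (fun f => (f ⟨_, hmem⟩ : MvPolynomial ℕ ℚ)) h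
    simp only [boxH, LinearMap.coe_restrict_apply, Derivation.coeFn_coe, sl2H_monomial,
      LinearMap.zero_apply, ZeroMemClass.coe_zero, smul_eq_zero, monomial_eq_zero, weight_single,
      degree_single, id, smul_eq_mul, mul_zero, one_ne_zero, or_false, Nat.cast_zero,
      zero_sub, neg_eq_zero] at hzero
    exact hmn.ne' (by rw [mul_comm]; exact_mod_cast hzero)
  lie_e_f := by
    ext ⟨p, hp⟩ : 2
    simp only [LieRing.of_associative_ring_bracket, LinearMap.sub_apply, Module.End.mul_apply,
      boxE, boxF, boxH, LinearMap.coe_restrict_apply, Submodule.coe_sub, Derivation.coeFn_coe]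
    rw [← Derivation.commutator_apply, lie_sl2E_sl2F]
  lie_h_e_nsmul := by
    ext ⟨p, hp⟩ : 2
    simp only [LieRing.of_associative_ring_bracket, LinearMap.sub_apply, Module.End.mul_apply,
      boxE, boxH, LinearMap.coe_restrict_apply, Submodule.coe_sub, Derivation.coeFn_coe,
      LinearMap.smul_apply, Submodule.coe_smul_of_tower]
    rw [← Derivation.commutator_apply, lie_sl2H_sl2E, Derivation.smul_apply, ofNat_smul_eq_nsmul]
  lie_h_f_nsmul := by
    ext ⟨p, hp⟩ : 2
    simp only [LieRing.of_associative_ring_bracket, LinearMap.sub_apply, Module.End.mul_apply,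
      boxF, boxH, LinearMap.coe_restrict_apply, Submodule.coe_sub, Derivation.coeFn_coe,
      LinearMap.smul_apply, Submodule.coe_smul_of_tower, LinearMap.neg_apply, Submodule.coe_neg]
    rw [← Derivation.commutator_apply, lie_sl2H_sl2F, Derivation.neg_apply, Derivation.smul_apply,
      ofNat_smul_eq_nsmul]

lemma eq_zero_of_sl2E_eq_zero {i : ℕ} (hi : 2 * i < m * n) {p : MvPolynomial ℕ ℚ}
    (hp : p ∈ restrictSupport ℚ (boxExponentsOfWeight m n i)) (hE : sl2E n p = 0) : p = 0 := by
  by_contra hp0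
  have hbox : p ∈ restrictSupport ℚ (boxExponents m n) :=
    restrictSupport_mono ℚ (Set.sep_subset _ _) hp
  have := finite_restrictSupport (R := ℚ) (boxExponents_finite m n)
  have hprim : (isSl2Triple_box m n (by omega)).HasPrimitiveVectorWith
      (⟨p, hbox⟩ : restrictSupport ℚ (boxExponents m n)) (2 * (i : ℚ) - n * m) :=
    { ne_zero := fun h => hp0 (congrArg Subtype.val h)
      lie_h := Subtype.ext (sl2H_apply_of_mem hp)
      lie_e := Subtype.ext hE }
  obtain ⟨k, hk⟩ := hprim.exists_nat
  have : (2 * i : ℚ) < n * m := by rw [mul_comm (n : ℚ)]; exact_mod_cast hi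
  linarith [(k.cast_nonneg : (0 : ℚ) ≤ k)]

end BoxSpace

theorem L_rank_unimodal_general (m n : ℕ) (i : ℕ) (hi : 2 * i < m * n) :
    Nat.card {f : Fin m → ℕ // (∀ j, f j ≤ n) ∧ Antitone f ∧ ∑ j, f j = i} ≤
    Nat.card {f : Fin m → ℕ // (∀ j, f j ≤ n) ∧ Antitone f ∧ ∑ j, f j = i + 1} := by
  rw [card_antitone_eq_card_boxExponentsOfWeight, card_antitone_eq_card_boxExponentsOfWeight,
    ← finrank_restrictSupport (R := ℚ), ← finrank_restrictSupport (R := ℚ)]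
  have := finite_restrictSupport (R := ℚ)
    ((boxExponents_finite m n).subset (Set.sep_subset _ _) :
      (boxExponentsOfWeight m n (i + 1)).Finite)
  let E := (sl2E n).toLinearMap.restrict fun _ hp => mapsTo_sl2E_boxExponentsOfWeight m n i hp
  refine LinearMap.finrank_le_finrank_of_injective (f := E) ?_
  rw [← LinearMap.ker_eq_bot, LinearMap.ker_eq_bot']
  exact fun p hp => Subtype.ext <| eq_zero_of_sl2E_eq_zero m n hi p.2 (congrArg Subtype.val hp)

/-- `L(m,n)` is rank unimodal below the middle rank: `p_i(m,n) ≤ p_{i+1}(m,n)`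
whenever `2 i < m n`. -/
theorem L_rank_unimodal (m n : ℕ) (hm : 0 < m) (hn : 0 < n) (i : ℕ) (hi : 2 * i < m * n) :
    Nat.card {f : Fin m → ℕ // (∀ j, f j ≤ n) ∧ Antitone f ∧ ∑ j, f j = i} ≤
    Nat.card {f : Fin m → ℕ // (∀ j, f j ≤ n) ∧ Antitone f ∧ ∑ j, f j = i + 1} :=
  L_rank_unimodal_general m n i hi
end

section
/- There is no triple λ = (λ1,λ2,λ3) of integers with λ1 ≥ 1 and λ1 ≥ λ2 ≥ λ3 ≥ 0 satisfying simultaneously: (i) λ ∉ E_{3,λ1}; (ii) λ2 + λ3 is even; and (iii) (λ1−1, λ2+1, λ3) ∈ E_{3,λ1−1}. -/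
/-- Membership in the poset `L(3,n)`: triples `(p₁,p₂,p₃)` with `n ≥ p₁ ≥ p₂ ≥ p₃ ≥ 0`. -/
def L3 (n : ℤ) : Set (ℤ × ℤ × ℤ) :=
  {p | p.1 ≤ n ∧ p.2.1 ≤ p.1 ∧ p.2.2 ≤ p.2.1 ∧ 0 ≤ p.2.2}

/-- The starting set `S_{3,m}`. -/
def S3 (m : ℤ) : Set (ℤ × ℤ × ℤ) :=
  {p | ∃ k ℓ : ℤ, 0 ≤ k ∧ 0 ≤ ℓ ∧ ℓ ≠ 1 ∧ 4 * k + ℓ ≤ m ∧ 2 * (6 * k + ℓ) ≤ 3 * m ∧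
    p = (4 * k + ℓ, 2 * k, 0)}

/-- The dual of a partition in `L(3,m)`. -/
def dual (m : ℤ) (p : ℤ × ℤ × ℤ) : ℤ × ℤ × ℤ :=
  (m - p.2.2, m - p.2.1, m - p.1)

/-- The end set `E_{3,m} = {λ* : λ ∈ S_{3,m}}`. -/
def E3 (m : ℤ) : Set (ℤ × ℤ × ℤ) := dual m '' S3 m

open Classical in
/-- The order matching `φ`. -/
noncomputable def phi (p : ℤ × ℤ × ℤ) : ℤ × ℤ × ℤ :=
  if p ∈ E3 p.1 then
    (p.1 + 1, p.2.1, p.2.2)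
  else if (Even (p.2.1 + p.2.2) ∧ (p.1 - 1, p.2.1 + 1, p.2.2) ∉ E3 (p.1 - 1)) ∨
      (¬ Even (p.2.1 + p.2.2) ∧ (p.1 - 1, p.2.1, p.2.2 + 1) ∈ E3 (p.1 - 1)) then
    (p.1, p.2.1 + 1, p.2.2)
  else
    (p.1, p.2.1, p.2.2 + 1)

lemma dual_dual (m : ℤ) (p : ℤ × ℤ × ℤ) : dual m (dual m p) = p := by
  simp [dual]

lemma mem_E3_iff {m : ℤ} {p : ℤ × ℤ × ℤ} : p ∈ E3 m ↔ dual m p ∈ S3 m := by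
  constructor
  · rintro ⟨q, hq, rfl⟩
    rwa [dual_dual]
  · exact fun h => ⟨dual m p, h, dual_dual m p⟩

lemma even_of_mem_S3 {m a b c : ℤ} (h : (a, b, c) ∈ S3 m) : Even b := by
  obtain ⟨k, ℓ, -, -, -, -, -, hp⟩ := h
  exact ⟨k, by simp only [Prod.mk.injEq] at hp; omega⟩

lemma add_one_mem_S3_add_one {m a b : ℤ} (h : (a, b, 0) ∈ S3 m) (ha : Odd a) :
    (a + 1, b + 2, 0) ∈ S3 (m + 1) := by
  obtain ⟨k, ℓ, hk, hℓ, hℓ1, hle, hle', hp⟩ := h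
  simp only [Prod.mk.injEq, and_true] at hp
  obtain ⟨rfl, rfl⟩ := hp
  obtain ⟨r, hr⟩ := ha
  -- `ℓ` is odd and `≠ 1`, hence `≥ 3`: trade three units of `ℓ` for one more `k`.
  exact ⟨k + 1, ℓ - 3, by omega, by omega, by omega, by omega, by omega,
    by ext <;> simp only <;> ring⟩

lemma add_one_mem_E3_add_one {m p₂ p₃ : ℤ} (h : (m, p₂, p₃) ∈ E3 m) (hodd : Odd (p₂ + p₃)) :
    (m + 1, p₂ - 1, p₃) ∈ E3 (m + 1) := by
  rw [mem_E3_iff] at h ⊢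
  simp only [dual, sub_self] at h ⊢
  have ha : Odd (m - p₃) := by
    rw [show m - p₃ = (m - p₂) + (p₂ + p₃) - 2 * p₃ by ring]
    exact ((even_of_mem_S3 h).add_odd hodd).sub_even (even_two_mul p₃)
  convert add_one_mem_S3_add_one h ha using 3 <;> ring

/-- There is no partition `λ` with `λ₁ ≥ 1` such that `λ ∉ E_{3,λ₁}`, `λ₂ + λ₃` is
even, and `(λ₁-1, λ₂+1, λ₃) ∈ E_{3,λ₁-1}`. -/
theorem no_vacuous_case :
    ¬ ∃ l1 l2 l3 : ℤ, 1 ≤ l1 ∧ l2 ≤ l1 ∧ l3 ≤ l2 ∧ 0 ≤ l3 ∧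
      (l1, l2, l3) ∉ E3 l1 ∧ Even (l2 + l3) ∧
      (l1 - 1, l2 + 1, l3) ∈ E3 (l1 - 1) := by
  rintro ⟨l1, l2, l3, -, -, -, -, hnot, heven, hmem⟩
  have hodd : Odd (l2 + 1 + l3) := by
    rw [add_right_comm]
    exact heven.add_one
  exact hnot (by simpa using add_one_mem_E3_add_one hmem hodd)
end

section
/- The map φ is well defined from L(3,n) \ E_{3,n} to L(3,n) \ S_{3,n}: for every λ ∈ L(3,n) \ E_{3,n}, exactly one of the four defining cases of φ applies, φ(λ) is obtained from λ by increasing exactly one coordinate by 1 (so φ(λ) ∈ L(3,n), λ < φ(λ), and |φ(λ)| = |λ| + 1), and φ(λ) ∉ S_{3,n}. -/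
/-- Case 1 of the definition of `φ`. -/
def Case1 (p : ℤ × ℤ × ℤ) : Prop := p ∈ E3 p.1

/-- Case 2 of the definition of `φ`. -/
def Case2 (p : ℤ × ℤ × ℤ) : Prop :=
  p ∉ E3 p.1 ∧ Even (p.2.1 + p.2.2) ∧ (p.1 - 1, p.2.1 + 1, p.2.2) ∉ E3 (p.1 - 1)

/-- Case 3 of the definition of `φ`. -/
def Case3 (p : ℤ × ℤ × ℤ) : Prop :=
  p ∉ E3 p.1 ∧ ¬ Even (p.2.1 + p.2.2) ∧ (p.1 - 1, p.2.1, p.2.2 + 1) ∈ E3 (p.1 - 1)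

/-- Case 4 of the definition of `φ`. -/
def Case4 (p : ℤ × ℤ × ℤ) : Prop :=
  p ∉ E3 p.1 ∧ ¬ Even (p.2.1 + p.2.2) ∧ (p.1 - 1, p.2.1, p.2.2 + 1) ∉ E3 (p.1 - 1)

lemma mem_S3_iff (m a b c : ℤ) : (a, b, c) ∈ S3 m ↔
    c = 0 ∧ b % 2 = 0 ∧ 0 ≤ b ∧ 2 * b ≤ a ∧ a - 2 * b ≠ 1 ∧ a ≤ m ∧ 2 * (a + b) ≤ 3 * m := by
  constructor
  · rintro ⟨k, ℓ, hk, hℓ, hℓ1, hm, hm', heq⟩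
    simp only [Prod.mk.injEq] at heq
    omega
  · intro h
    refine ⟨b / 2, a - 2 * b, by omega, by omega, by omega, by omega, by omega, ?_⟩
    simp only [Prod.mk.injEq]
    omega

lemma mem_E3_iff_s6 (m a b c : ℤ) : (a, b, c) ∈ E3 m ↔
    a = m ∧ (m - b) % 2 = 0 ∧ b ≤ m ∧ 0 ≤ 2 * b - m - c ∧ 2 * b - m - c ≠ 1 ∧ 0 ≤ c ∧
      m ≤ 2 * (b + c) := by
  constructor
  · rintro ⟨⟨x, y, z⟩, hq, hdual⟩
    rw [mem_S3_iff] at hq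
    simp only [dual, Prod.mk.injEq] at hdual
    omega
  · intro h
    refine ⟨(m - c, m - b, m - a), ?_, ?_⟩
    · rw [mem_S3_iff]; omega
    · simp only [dual, Prod.mk.injEq]; omega

lemma mem_E3_of_even_of_mem_E3_pred {a b c : ℤ} (hbc : Even (b + c))
    (h : (a - 1, b + 1, c) ∈ E3 (a - 1)) : (a, b, c) ∈ E3 a := by
  rw [mem_E3_iff_s6] at h ⊢
  rw [Int.even_iff] at hbc
  omega

lemma case1_or_case2_or_case3_or_case4 (p : ℤ × ℤ × ℤ) :
    Case1 p ∨ Case2 p ∨ Case3 p ∨ Case4 p := by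
  by_cases h1 : Case1 p
  · exact Or.inl h1
  by_cases hev : Even (p.2.1 + p.2.2)
  · exact Or.inr <| Or.inl ⟨h1, hev, fun h => h1 (mem_E3_of_even_of_mem_E3_pred hev h)⟩
  by_cases h3 : (p.1 - 1, p.2.1, p.2.2 + 1) ∈ E3 (p.1 - 1)
  · exact Or.inr <| Or.inr <| Or.inl ⟨h1, hev, h3⟩
  · exact Or.inr <| Or.inr <| Or.inr ⟨h1, hev, h3⟩

lemma exactly_one_case (p : ℤ × ℤ × ℤ) :
    (Case1 p ∧ ¬ Case2 p ∧ ¬ Case3 p ∧ ¬ Case4 p) ∨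
    (Case2 p ∧ ¬ Case1 p ∧ ¬ Case3 p ∧ ¬ Case4 p) ∨
    (Case3 p ∧ ¬ Case1 p ∧ ¬ Case2 p ∧ ¬ Case4 p) ∨
    (Case4 p ∧ ¬ Case1 p ∧ ¬ Case2 p ∧ ¬ Case3 p) := by
  have := case1_or_case2_or_case3_or_case4 p
  unfold Case1 Case2 Case3 Case4 at *
  tauto

section Cases

variable {p : ℤ × ℤ × ℤ}

lemma phi_of_case1 (h : Case1 p) : phi p = (p.1 + 1, p.2.1, p.2.2) :=
  if_pos h

lemma phi_of_case2 (h : Case2 p) : phi p = (p.1, p.2.1 + 1, p.2.2) :=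
  (if_neg h.1).trans (if_pos (Or.inl h.2))

lemma phi_of_case3 (h : Case3 p) : phi p = (p.1, p.2.1 + 1, p.2.2) :=
  (if_neg h.1).trans (if_pos (Or.inr h.2))

lemma phi_of_case4 (h : Case4 p) : phi p = (p.1, p.2.1, p.2.2 + 1) :=
  (if_neg h.1).trans (if_neg (by rintro (⟨he, -⟩ | ⟨-, hE⟩); exacts [h.2.1 he, h.2.2 hE]))

variable {n : ℤ}

lemma mem_L3_sdiff_S3_of_case1 (hp : p ∈ L3 n) (hpE : p ∉ E3 n) (h : Case1 p) :
    (p.1 + 1, p.2.1, p.2.2) ∈ L3 n \ S3 n := by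
  obtain ⟨a, b, c⟩ := p
  simp only [Case1, L3, Set.mem_sdiff, Set.mem_ofPred_eq, mem_E3_iff_s6, mem_S3_iff, true_and] at *
  omega

lemma mem_L3_sdiff_S3_of_case2 (hp : p ∈ L3 n) (h : Case2 p) :
    (p.1, p.2.1 + 1, p.2.2) ∈ L3 n \ S3 n := by
  obtain ⟨a, b, c⟩ := p
  simp only [Case2, L3, Set.mem_sdiff, Set.mem_ofPred_eq, mem_E3_iff_s6, mem_S3_iff, true_and,
    Int.even_iff] at *
  omega

lemma mem_L3_sdiff_S3_of_case3 (hp : p ∈ L3 n) (h : Case3 p) :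
    (p.1, p.2.1 + 1, p.2.2) ∈ L3 n \ S3 n := by
  obtain ⟨a, b, c⟩ := p
  simp only [Case3, L3, Set.mem_sdiff, Set.mem_ofPred_eq, mem_E3_iff_s6, mem_S3_iff, true_and,
    Int.not_even_iff] at *
  omega

lemma mem_L3_sdiff_S3_of_case4 (hp : p ∈ L3 n) (h : Case4 p) :
    (p.1, p.2.1, p.2.2 + 1) ∈ L3 n \ S3 n := by
  obtain ⟨a, b, c⟩ := p
  simp only [Case4, L3, Set.mem_sdiff, Set.mem_ofPred_eq, mem_S3_iff, Int.not_even_iff] at *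
  omega

end Cases

lemma lt_and_rank_eq_add_one_of_increment {p q : ℤ × ℤ × ℤ}
    (h : q = (p.1 + 1, p.2.1, p.2.2) ∨ q = (p.1, p.2.1 + 1, p.2.2) ∨
      q = (p.1, p.2.1, p.2.2 + 1)) :
    p < q ∧ q.1 + q.2.1 + q.2.2 = p.1 + p.2.1 + p.2.2 + 1 := by
  obtain ⟨a, b, c⟩ := p
  rcases h with rfl | rfl | rfl <;>
    simp only [Prod.mk_lt_mk, Prod.mk_le_mk] <;> omega

theorem phi_well_defined_general (n : ℤ) (p : ℤ × ℤ × ℤ)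
    (hp : p ∈ L3 n) (hpE : p ∉ E3 n) :
    ((Case1 p ∧ ¬ Case2 p ∧ ¬ Case3 p ∧ ¬ Case4 p) ∨
     (Case2 p ∧ ¬ Case1 p ∧ ¬ Case3 p ∧ ¬ Case4 p) ∨
     (Case3 p ∧ ¬ Case1 p ∧ ¬ Case2 p ∧ ¬ Case4 p) ∨
     (Case4 p ∧ ¬ Case1 p ∧ ¬ Case2 p ∧ ¬ Case3 p)) ∧
    (phi p = (p.1 + 1, p.2.1, p.2.2) ∨ phi p = (p.1, p.2.1 + 1, p.2.2) ∨
      phi p = (p.1, p.2.1, p.2.2 + 1)) ∧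
    phi p ∈ L3 n ∧ p < phi p ∧
    (phi p).1 + (phi p).2.1 + (phi p).2.2 = p.1 + p.2.1 + p.2.2 + 1 ∧
    phi p ∉ S3 n := by
  obtain ⟨hcover, hmem, hS⟩ : (phi p = (p.1 + 1, p.2.1, p.2.2) ∨
      phi p = (p.1, p.2.1 + 1, p.2.2) ∨ phi p = (p.1, p.2.1, p.2.2 + 1)) ∧
      phi p ∈ L3 n \ S3 n := by
    rcases case1_or_case2_or_case3_or_case4 p with h | h | h | h
    · rw [phi_of_case1 h]; exact ⟨Or.inl rfl, mem_L3_sdiff_S3_of_case1 hp hpE h⟩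
    · rw [phi_of_case2 h]; exact ⟨Or.inr (Or.inl rfl), mem_L3_sdiff_S3_of_case2 hp h⟩
    · rw [phi_of_case3 h]; exact ⟨Or.inr (Or.inl rfl), mem_L3_sdiff_S3_of_case3 hp h⟩
    · rw [phi_of_case4 h]; exact ⟨Or.inr (Or.inr rfl), mem_L3_sdiff_S3_of_case4 hp h⟩
  obtain ⟨hlt, hrank⟩ := lt_and_rank_eq_add_one_of_increment hcover
  exact ⟨exactly_one_case p, hcover, hmem, hlt, hrank, hS⟩

/-- `φ` is well defined from `L(3,n) \ E_{3,n}` to `L(3,n) \ S_{3,n}`: exactly one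
of the four defining cases applies, `φ` increases exactly one coordinate by `1`
(hence `φ(λ) ∈ L(3,n)`, `λ < φ(λ)`, and `|φ(λ)| = |λ| + 1`), and `φ(λ) ∉ S_{3,n}`. -/
theorem phi_well_defined (n : ℤ) (hn : 0 < n) (p : ℤ × ℤ × ℤ)
    (hp : p ∈ L3 n) (hpE : p ∉ E3 n) :
    ((Case1 p ∧ ¬ Case2 p ∧ ¬ Case3 p ∧ ¬ Case4 p) ∨
     (Case2 p ∧ ¬ Case1 p ∧ ¬ Case3 p ∧ ¬ Case4 p) ∨
     (Case3 p ∧ ¬ Case1 p ∧ ¬ Case2 p ∧ ¬ Case4 p) ∨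
     (Case4 p ∧ ¬ Case1 p ∧ ¬ Case2 p ∧ ¬ Case3 p)) ∧
    (phi p = (p.1 + 1, p.2.1, p.2.2) ∨ phi p = (p.1, p.2.1 + 1, p.2.2) ∨
      phi p = (p.1, p.2.1, p.2.2 + 1)) ∧
    phi p ∈ L3 n ∧ p < phi p ∧
    (phi p).1 + (phi p).2.1 + (phi p).2.2 = p.1 + p.2.1 + p.2.2 + 1 ∧
    phi p ∉ S3 n :=
  phi_well_defined_general n p hp hpE
end

section
/- For every positive integer n and every integer i with 2i < 3n, every λ ∈ L(3,n) of rank i lies outside E_{3,n}, and φ restricted to the rank-i elements of L(3,n) is an injective map into the rank-(i+1) elements of L(3,n) with λ < φ(λ); that is, φ gives an explicit order matching from L_i(3,n) to L_{i+1}(3,n) for every i below the middle rank. -/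
def rank (p : ℤ × ℤ × ℤ) : ℤ := p.1 + p.2.1 + p.2.2

/-- The witness is `k = (m - b) / 2`, `ℓ = 2b - m - c`. -/
lemma mk_mem_E3_iff {m a b c : ℤ} :
    (a, b, c) ∈ E3 m ↔ a = m ∧ b ≤ m ∧ 0 ≤ c ∧ (m - b) % 2 = 0 ∧
      c + m ≤ 2 * b ∧ c + m + 1 ≠ 2 * b ∧ m ≤ 2 * b + 2 * c := by
  constructor
  · rintro ⟨q, ⟨k, ℓ, hk, hℓ, hℓ1, h1, h2, rfl⟩, hq⟩
    simp only [dual, Prod.mk.injEq] at hq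
    omega
  · rintro ⟨rfl, hb, hc, hpar, h1, h2, h3⟩
    refine ⟨(a - c, a - b, 0), ⟨(a - b) / 2, 2 * b - a - c, ?_⟩, ?_⟩
    · refine ⟨by omega, by omega, by omega, by omega, by omega, ?_⟩
      simp only [Prod.mk.injEq, and_true]
      omega
    · simp only [dual, Prod.mk.injEq]
      omega

lemma three_mul_le_two_mul_rank_of_mem_E3 {m : ℤ} {p : ℤ × ℤ × ℤ} (hp : p ∈ E3 m) :
    3 * m ≤ 2 * rank p := by
  obtain ⟨a, b, c⟩ := p
  rw [mk_mem_E3_iff] at hp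
  simp only [rank]
  omega

lemma mk_self_mem_E3 {a c : ℤ} (hc : 0 ≤ c) (hca : c ≤ a) (heven : Even (a + c)) :
    (a, a, c) ∈ E3 a := by
  rw [Int.even_iff] at heven
  rw [mk_mem_E3_iff]
  omega

lemma snd_le_of_mk_mem_E3 {m a b c : ℤ} (h : (a, b, c) ∈ E3 m) : b ≤ m :=
  (mk_mem_E3_iff.mp h).2.1

lemma mk_notMem_E3_of_mem_E3_snd_succ {m a b c a' c' : ℤ} (h : (a, b, c) ∈ E3 m) :
    (a', b + 1, c') ∉ E3 m := by
  rw [mk_mem_E3_iff] at h ⊢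
  omega

lemma mk_mem_E3_of_even_of_mem_E3_sub_one {a b c : ℤ} (heven : Even (b + c))
    (h : (a - 1, b + 1, c) ∈ E3 (a - 1)) : (a, b, c) ∈ E3 a := by
  rw [Int.even_iff] at heven
  rw [mk_mem_E3_iff] at h ⊢
  omega

lemma mk_mem_E3_of_mem_E3_sub_one {a b c : ℤ} (hc : 0 ≤ c)
    (h : (a - 1, b - 1, c + 2) ∈ E3 (a - 1)) : (a, b, c) ∈ E3 a := by
  rw [mk_mem_E3_iff] at h ⊢
  omega

lemma phi_cases (a b c : ℤ) :
    (a, b, c) ∈ E3 a ∧ phi (a, b, c) = (a + 1, b, c) ∨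
    (a, b, c) ∉ E3 a ∧
      (Even (b + c) ∧ (a - 1, b + 1, c) ∉ E3 (a - 1) ∨
        ¬ Even (b + c) ∧ (a - 1, b, c + 1) ∈ E3 (a - 1)) ∧
      phi (a, b, c) = (a, b + 1, c) ∨
    (a, b, c) ∉ E3 a ∧ ¬ Even (b + c) ∧ (a - 1, b, c + 1) ∉ E3 (a - 1) ∧
      phi (a, b, c) = (a, b, c + 1) := by
  unfold phi
  split_ifs with hA hB
  · exact Or.inl ⟨hA, rfl⟩
  · exact Or.inr (Or.inl ⟨hA, hB, rfl⟩)
  · have hodd : ¬ Even (b + c) := fun heven =>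
      hA (mk_mem_E3_of_even_of_mem_E3_sub_one heven (not_not.mp fun h => hB (Or.inl ⟨heven, h⟩)))
    exact Or.inr (Or.inr ⟨hA, hodd, fun h => hB (Or.inr ⟨hodd, h⟩), rfl⟩)

lemma rank_phi (p : ℤ × ℤ × ℤ) : rank (phi p) = rank p + 1 := by
  obtain ⟨a, b, c⟩ := p
  rcases phi_cases a b c with ⟨-, h⟩ | ⟨-, -, h⟩ | ⟨-, -, -, h⟩ <;>
    · rw [h]; simp only [rank]; ring

lemma lt_phi (p : ℤ × ℤ × ℤ) : p < phi p := by
  obtain ⟨a, b, c⟩ := p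
  rcases phi_cases a b c with ⟨-, h⟩ | ⟨-, -, h⟩ | ⟨-, -, -, h⟩ <;>
    · rw [h]; simp only [Prod.mk_lt_mk, Prod.mk_le_mk]; omega

lemma phi_mem_L3 {n : ℤ} {p : ℤ × ℤ × ℤ} (hp : p ∈ L3 n) (hrank : 2 * rank p < 3 * n) :
    phi p ∈ L3 n := by
  obtain ⟨a, b, c⟩ := p
  obtain ⟨han, hba, hcb, hc⟩ : a ≤ n ∧ b ≤ a ∧ c ≤ b ∧ 0 ≤ c := hp
  change 2 * (a + b + c) < 3 * n at hrank
  rcases phi_cases a b c with ⟨hA, h⟩ | ⟨hA, hB, h⟩ | ⟨-, hodd, -, h⟩ <;> rw [h]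
  · have := three_mul_le_two_mul_rank_of_mem_E3 hA
    change 3 * a ≤ 2 * (a + b + c) at this
    exact ⟨(by omega : a + 1 ≤ n), (by omega : b ≤ a + 1), hcb, hc⟩
  · have hab : b ≠ a := by
      rintro rfl
      rcases hB with ⟨heven, -⟩ | ⟨-, hmem⟩
      · exact hA (mk_self_mem_E3 hc hcb heven)
      · linarith [snd_le_of_mk_mem_E3 hmem]
    exact ⟨han, (by omega : b + 1 ≤ a), (by omega : c ≤ b + 1), hc⟩
  · have hcb' : c ≠ b := by
      rintro rfl
      exact hodd ⟨c, rfl⟩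
    exact ⟨han, hba, (by omega : c + 1 ≤ b), (by omega : 0 ≤ c + 1)⟩

open Classical in
noncomputable def phiInv (p : ℤ × ℤ × ℤ) : ℤ × ℤ × ℤ :=
  if (p.1 - 1, p.2.1, p.2.2) ∈ E3 (p.1 - 1) then
    (p.1 - 1, p.2.1, p.2.2)
  else if ¬ Even (p.2.1 + p.2.2) ∨ (p.1 - 1, p.2.1 - 1, p.2.2 + 1) ∈ E3 (p.1 - 1) then
    (p.1, p.2.1 - 1, p.2.2)
  else
    (p.1, p.2.1, p.2.2 - 1)

lemma phiInv_phi {p : ℤ × ℤ × ℤ} (hc : 0 ≤ p.2.2) : phiInv (phi p) = p := by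
  obtain ⟨a, b, c⟩ := p
  rcases phi_cases a b c with ⟨hA, h⟩ | ⟨-, hB, h⟩ | ⟨hA, hodd, hC, h⟩ <;> rw [h]
  · simp [phiInv, hA]
  · rcases hB with ⟨heven, hnot⟩ | ⟨-, hmem⟩
    · have hodd : ¬ Even (b + 1 + c) := by
        rw [Int.even_iff] at heven ⊢
        omega
      simp [phiInv, hnot, hodd]
    · simp [phiInv, mk_notMem_E3_of_mem_E3_snd_succ hmem, hmem]
  · have heven : Even (b + (c + 1)) := by
      rw [Int.even_iff] at hodd ⊢
      omega
    have hnot : (a - 1, b - 1, c + 1 + 1) ∉ E3 (a - 1) := fun hmem =>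
      hA (mk_mem_E3_of_mem_E3_sub_one hc (by convert hmem using 3; ring))
    simp [phiInv, hC, heven, hnot]

lemma phi_injOn : Set.InjOn phi {p | 0 ≤ p.2.2} :=
  Set.LeftInvOn.injOn fun _ hp => phiInv_phi hp

theorem phi_order_matching_general (n i : ℤ) (hi : 2 * i < 3 * n) :
    (∀ p ∈ L3 n, p.1 + p.2.1 + p.2.2 = i → p ∉ E3 n) ∧
    Set.InjOn phi {p | p ∈ L3 n ∧ p.1 + p.2.1 + p.2.2 = i} ∧
    (∀ p ∈ L3 n, p.1 + p.2.1 + p.2.2 = i →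
      phi p ∈ L3 n ∧ (phi p).1 + (phi p).2.1 + (phi p).2.2 = i + 1 ∧ p < phi p) := by
  refine ⟨fun p _ hpi hE => ?_, phi_injOn.mono fun p hp => hp.1.2.2.2, fun p hp hpi => ?_⟩
  · have := three_mul_le_two_mul_rank_of_mem_E3 hE
    rw [rank, hpi] at this
    omega
  · subst hpi
    exact ⟨phi_mem_L3 hp hi, rank_phi p, lt_phi p⟩

/-- For every rank `i` below the middle rank, all rank-`i` elements lie outside
`E_{3,n}`, and `φ` restricts to an order matching from `L_i(3,n)` into
`L_{i+1}(3,n)`. -/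
theorem phi_order_matching (n i : ℤ) (hn : 0 < n) (hi : 2 * i < 3 * n) :
    (∀ p ∈ L3 n, p.1 + p.2.1 + p.2.2 = i → p ∉ E3 n) ∧
    Set.InjOn phi {p | p ∈ L3 n ∧ p.1 + p.2.1 + p.2.2 = i} ∧
    (∀ p ∈ L3 n, p.1 + p.2.1 + p.2.2 = i →
      phi p ∈ L3 n ∧ (phi p).1 + (phi p).2.1 + (phi p).2.2 = i + 1 ∧ p < phi p) :=
  phi_order_matching_general n i hi
end

section
/- For all integers k ≥ 1 and c ≥ 0, the partition λ = (4k+c+1, 2k+c, c) satisfies: λ ∉ E_{3,λ1}, λ2+λ3 is even, and (λ1−1, λ2+1, λ3) ∉ E_{3,λ1−1}. -/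
theorem even_sub_of_mem_E3 {m : ℤ} {p : ℤ × ℤ × ℤ} (hp : p ∈ E3 m) : Even (m - p.2.1) := by
  obtain ⟨_, ⟨k, ℓ, -, -, -, -, -, rfl⟩, rfl⟩ := hp
  exact ⟨k, by simp only [dual]; ring⟩

theorem lem_A2_general (k c : ℤ) :
    ((4 * k + c + 1, 2 * k + c, c) : ℤ × ℤ × ℤ) ∉ E3 (4 * k + c + 1) ∧
    Even ((2 * k + c) + c) ∧
    ((4 * k + c, 2 * k + c + 1, c) : ℤ × ℤ × ℤ) ∉ E3 (4 * k + c) := by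
  refine ⟨fun h => ?_, ⟨k + c, by ring⟩, fun h => ?_⟩
  · have heven := even_sub_of_mem_E3 h
    simp only [show 4 * k + c + 1 - (2 * k + c) = 2 * k + 1 by ring] at heven
    exact Int.not_even_two_mul_add_one k heven
  · have heven := even_sub_of_mem_E3 h
    simp only [show 4 * k + c - (2 * k + c + 1) = 2 * (k - 1) + 1 by ring] at heven
    exact Int.not_even_two_mul_add_one (k - 1) heven

/-- Lemma (A₂): for `k ≥ 1`, `c ≥ 0`, `λ = (4k+c+1, 2k+c, c)` satisfies
`λ ∉ E_{3,λ₁}`, `λ₂ + λ₃` is even, and `(λ₁-1, λ₂+1, λ₃) ∉ E_{3,λ₁-1}`. -/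
theorem lem_A2 (k c : ℤ) (hk : 1 ≤ k) (hc : 0 ≤ c) :
    ((4 * k + c + 1, 2 * k + c, c) : ℤ × ℤ × ℤ) ∉ E3 (4 * k + c + 1) ∧
    Even ((2 * k + c) + c) ∧
    ((4 * k + c, 2 * k + c + 1, c) : ℤ × ℤ × ℤ) ∉ E3 (4 * k + c) :=
  lem_A2_general k c
end

section
/- For all integers k ≥ 0, ℓ ≥ 2, and c with 1 ≤ c ≤ ℓ−3, the partition λ = (4k+ℓ, 2k+c+1, c) satisfies: λ ∉ E_{3,λ1}, λ2+λ3 is odd, and (λ1−1, λ2, λ3+1) ∉ E_{3,λ1−1}. -/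
/- Duality negates `λ₁ + λ₃ - 2λ₂`, which equals `ℓ ≥ 0` on `(4k+ℓ, 2k, 0) ∈ S_{3,m}`; so every
element of `E_{3,m}` has `λ₁ + λ₃ ≤ 2λ₂`, and both triples of the theorem violate this
because `c ≤ ℓ - 3`. -/

theorem fst_add_snd_snd_le_two_mul_of_mem_E3 {m : ℤ} {p : ℤ × ℤ × ℤ} (hp : p ∈ E3 m) :
    p.1 + p.2.2 ≤ 2 * p.2.1 := by
  obtain ⟨q, ⟨k, ℓ, -, hℓ, -, -, -, rfl⟩, rfl⟩ := hp
  simp only [dual]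
  linarith

theorem lem_B3_general (k l c : ℤ) (hc2 : c ≤ l - 3) :
    ((4 * k + l, 2 * k + c + 1, c) : ℤ × ℤ × ℤ) ∉ E3 (4 * k + l) ∧
    Odd ((2 * k + c + 1) + c) ∧
    ((4 * k + l - 1, 2 * k + c + 1, c + 1) : ℤ × ℤ × ℤ) ∉ E3 (4 * k + l - 1) := by
  refine ⟨fun h => ?_, ⟨k + c, by ring⟩, fun h => ?_⟩ <;>
  · have := fst_add_snd_snd_le_two_mul_of_mem_E3 h
    dsimp only at this
    linarith

/-- Lemma (B₃): for `k ≥ 0`, `ℓ ≥ 2`, `1 ≤ c ≤ ℓ-3`, `λ = (4k+ℓ, 2k+c+1, c)`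
satisfies `λ ∉ E_{3,λ₁}`, `λ₂ + λ₃` is odd, and `(λ₁-1, λ₂, λ₃+1) ∉ E_{3,λ₁-1}`. -/
theorem lem_B3 (k l c : ℤ) (hk : 0 ≤ k) (hl : 2 ≤ l) (hc1 : 1 ≤ c) (hc2 : c ≤ l - 3) :
    ((4 * k + l, 2 * k + c + 1, c) : ℤ × ℤ × ℤ) ∉ E3 (4 * k + l) ∧
    Odd ((2 * k + c + 1) + c) ∧
    ((4 * k + l - 1, 2 * k + c + 1, c + 1) : ℤ × ℤ × ℤ) ∉ E3 (4 * k + l - 1) :=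
  lem_B3_general k l c hc2
end
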